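/- arXiv:1010.5001 — 4 statements merged into one kernel-verified Lean document; each statement's English description precedes it below -/
import Mathlib

section
/- Let f be a Schwartz function on ℝ and t ∈ ℝ. Then for every x ∈ ℝ, x·(U(t)f)(x) = (U(t)g)(x), where g is the Schwartz function g(y) = 3t·f''(y) + y·f(y). In other words, the operator x + 3t∂_x² commutes with the Airy group: x U(t)f = U(t)(3t ∂_x² f + x f). -/
open MeasureTheory Complex

/-- Fourier transform `f̂(ξ) = ∫ f(x) e^{-ixξ} dx`. -/
noncomputable def FT (f : ℝ → ℂ) (ξ : ℝ) : ℂ :=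
  ∫ x : ℝ, f x * Complex.exp (-Complex.I * x * ξ)

/-- Inverse Fourier transform `f̌(x) = (2π)⁻¹ ∫ f(ξ) e^{ixξ} dξ`. -/
noncomputable def invFT (f : ℝ → ℂ) (x : ℝ) : ℂ :=
  (2 * Real.pi)⁻¹ • ∫ ξ : ℝ, f ξ * Complex.exp (Complex.I * x * ξ)

/-- The Airy group: `U(t)f` is the inverse Fourier transform of `ξ ↦ e^{itξ³} f̂(ξ)`. -/
noncomputable def airyU (t : ℝ) (f : ℝ → ℂ) : ℝ → ℂ :=
  invFT fun ξ => Complex.exp (Complex.I * t * (ξ : ℂ) ^ 3) * FT f ξ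

/-!
On the Fourier side `U(t)` is multiplication by the unimodular phase `e^{itξ³}`, and
multiplication by `x` becomes `i ∂_ξ` (integrate by parts). By the product rule,
`i ∂_ξ (e^{itξ³} f̂) = e^{itξ³} (-3tξ² f̂ + i ∂_ξ f̂)`, and `-3tξ² f̂ + i ∂_ξ f̂` is the Fourier
transform of `3t f'' + y f`. Since `f̂` is again Schwartz, all integrability conditions hold.
-/

open scoped SchwartzMap FourierTransform
open Real

lemma FT_eq_fourier (g : ℝ → ℂ) (ξ : ℝ) : FT g ξ = 𝓕 g (ξ / (2 * π)) := by
  rw [Real.fourier_real_eq_integral_exp_smul, FT]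
  congr 1 with y
  rw [smul_eq_mul, mul_comm]
  congr 2
  push_cast
  field_simp

lemma invFT_eq_FT_neg (g : ℝ → ℂ) (x : ℝ) : invFT g x = (2 * π)⁻¹ • FT g (-x) := by
  simp only [invFT, FT, ofReal_neg, mul_neg, neg_mul, neg_neg]
  congr 2 with ξ
  ring_nf

lemma FT_const_mul (c : ℂ) (g : ℝ → ℂ) (ξ : ℝ) :
    FT (fun y => c * g y) ξ = c * FT g ξ := by
  simp_rw [FT, mul_assoc]
  exact integral_const_mul c _

lemma integrable_mul_exp_neg_I_mul {g : ℝ → ℂ} (hg : Integrable g) (ξ : ℝ) :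
    Integrable (fun y : ℝ => g y * Complex.exp (-I * y * ξ)) := by
  refine hg.norm.mono' (hg.1.mul (by fun_prop : Continuous _).aestronglyMeasurable) ?_
  filter_upwards with y
  simp [Complex.norm_exp]

lemma FT_add {g₁ g₂ : ℝ → ℂ} (h₁ : Integrable g₁) (h₂ : Integrable g₂) (ξ : ℝ) :
    FT (fun y => g₁ y + g₂ y) ξ = FT g₁ ξ + FT g₂ ξ := by
  simp_rw [FT, add_mul]
  exact integral_add (integrable_mul_exp_neg_I_mul h₁ ξ) (integrable_mul_exp_neg_I_mul h₂ ξ)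

lemma FT_deriv {g : ℝ → ℂ} (hg : Integrable g) (hg_diff : Differentiable ℝ g)
    (hg' : Integrable (deriv g)) (ξ : ℝ) :
    FT (deriv g) ξ = I * ξ * FT g ξ := by
  rw [FT_eq_fourier, FT_eq_fourier, Real.fourier_deriv hg hg_diff hg']
  simp only [smul_eq_mul]
  push_cast
  field_simp

lemma hasDerivAt_FT {g : ℝ → ℂ} (hg : Integrable g) (hg' : Integrable fun y : ℝ => (y : ℂ) * g y)
    (ξ : ℝ) : HasDerivAt (FT g) (-I * FT (fun y : ℝ => (y : ℂ) * g y) ξ) ξ := by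
  have hscale : HasDerivAt (fun ξ : ℝ => ξ / (2 * π)) (2 * π)⁻¹ ξ := by
    simpa using (hasDerivAt_id ξ).div_const (2 * π)
  have hsmul : Integrable fun y : ℝ => y • g y := by simpa [Complex.real_smul] using hg'
  have := (Real.hasDerivAt_fourier hg hsmul (ξ / (2 * π))).scomp ξ hscale
  rw [show FT g = 𝓕 g ∘ fun ξ => ξ / (2 * π) from funext (FT_eq_fourier g)]
  refine this.congr_deriv ?_
  rw [← FT_eq_fourier, Complex.real_smul]
  simp_rw [smul_eq_mul, mul_assoc (-2 * (π : ℂ) * I), FT_const_mul]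
  push_cast
  field_simp

lemma ofReal_mul_invFT {g : ℝ → ℂ} (hg : Integrable g) (hg_diff : Differentiable ℝ g)
    (hg' : Integrable (deriv g)) (x : ℝ) :
    (x : ℂ) * invFT g x = invFT (fun ξ => I * deriv g ξ) x := by
  rw [invFT_eq_FT_neg, invFT_eq_FT_neg, FT_const_mul, FT_deriv hg hg_diff hg', mul_smul_comm]
  congr 1
  push_cast
  linear_combination (x : ℂ) * FT g (-x) * I_sq

noncomputable def airyPhase (t ξ : ℝ) : ℂ := Complex.exp (I * t * (ξ : ℂ) ^ 3)

lemma norm_airyPhase (t ξ : ℝ) : ‖airyPhase t ξ‖ = 1 := by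
  rw [airyPhase, show I * t * (ξ : ℂ) ^ 3 = ((t * ξ ^ 3 : ℝ) : ℂ) * I by push_cast; ring]
  exact norm_exp_ofReal_mul_I _

lemma hasDerivAt_airyPhase (t ξ : ℝ) :
    HasDerivAt (airyPhase t) (airyPhase t ξ * (3 * I * t * (ξ : ℂ) ^ 2)) ξ := by
  have := (((hasDerivAt_pow 3 (ξ : ℂ)).const_mul (I * t)).cexp).comp_ofReal
  exact this.congr_deriv (by rw [airyPhase]; ring)

lemma MeasureTheory.Integrable.airyPhase_mul {g : ℝ → ℂ} (hg : Integrable g) (t : ℝ) :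
    Integrable fun ξ => airyPhase t ξ * g ξ :=
  hg.bdd_mul (c := 1) (by unfold airyPhase; fun_prop) (.of_forall fun ξ => (norm_airyPhase t ξ).le)

namespace SchwartzMap

lemma FT_deriv (φ : 𝓢(ℝ, ℂ)) (ξ : ℝ) : FT (deriv φ) ξ = I * ξ * FT φ ξ :=
  _root_.FT_deriv φ.integrable φ.differentiable (derivCLM ℝ ℂ φ).integrable ξ

lemma integrable_ofReal_pow_mul (φ : 𝓢(ℝ, ℂ)) (k : ℕ) :
    Integrable fun y : ℝ => (y : ℂ) ^ k * φ y := by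
  refine (φ.integrable_pow_mul volume k).mono'
    ((continuous_ofReal.pow k).mul φ.continuous).aestronglyMeasurable ?_
  filter_upwards with y
  simp

lemma integrable_ofReal_mul (φ : 𝓢(ℝ, ℂ)) : Integrable fun y : ℝ => (y : ℂ) * φ y := by
  simpa using φ.integrable_ofReal_pow_mul 1

lemma exists_coe_eq_FT (φ : 𝓢(ℝ, ℂ)) : ∃ ψ : 𝓢(ℝ, ℂ), ⇑ψ = FT φ := by
  let scale : ℝ ≃L[ℝ] ℝ :=
    (LinearEquiv.smulOfNeZero ℝ ℝ (2 * π)⁻¹ (by positivity)).toContinuousLinearEquiv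
  refine ⟨compCLMOfContinuousLinearEquiv ℝ scale (fourierTransformCLM ℂ φ), funext fun ξ => ?_⟩
  rw [FT_eq_fourier, div_eq_inv_mul]
  rfl

lemma hasDerivAt_airyPhase_mul (φ : 𝓢(ℝ, ℂ)) (t ξ : ℝ) :
    HasDerivAt (fun ξ => airyPhase t ξ * φ ξ)
      (airyPhase t ξ * (3 * I * t * (ξ : ℂ) ^ 2 * φ ξ + deriv φ ξ)) ξ :=
  ((hasDerivAt_airyPhase t ξ).mul (φ.hasDerivAt ξ)).congr_deriv (by ring)

lemma integrable_deriv_airyPhase_mul (φ : 𝓢(ℝ, ℂ)) (t : ℝ) :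
    Integrable (deriv fun ξ => airyPhase t ξ * φ ξ) := by
  rw [funext fun ξ => (φ.hasDerivAt_airyPhase_mul t ξ).deriv]
  refine Integrable.airyPhase_mul (.add ?_ (derivCLM ℝ ℂ φ).integrable) t
  simp_rw [mul_assoc (3 * I * t)]
  exact (φ.integrable_ofReal_pow_mul 2).const_mul _

lemma FT_airyGenerator (φ : 𝓢(ℝ, ℂ)) (t ξ : ℝ) :
    FT (fun y => 3 * (t : ℂ) * deriv (deriv φ) y + (y : ℂ) * φ y) ξ
      = -3 * t * (ξ : ℂ) ^ 2 * FT φ ξ + FT (fun y => (y : ℂ) * φ y) ξ := by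
  have h₂ : FT (deriv (deriv φ)) ξ = -(ξ : ℂ) ^ 2 * FT φ ξ := by
    rw [show deriv (deriv φ) = deriv (derivCLM ℝ ℂ φ) from rfl, FT_deriv,
      show ⇑(derivCLM ℝ ℂ φ) = deriv φ from rfl, FT_deriv]
    linear_combination (ξ : ℂ) ^ 2 * FT φ ξ * I_sq
  have h_int : Integrable (deriv (deriv φ)) := (derivCLM ℝ ℂ (derivCLM ℝ ℂ φ)).integrable
  rw [FT_add (h_int.const_mul _) φ.integrable_ofReal_mul, FT_const_mul, h₂]
  ring

end SchwartzMap

/-- The operator `x + 3t ∂_x²` commutes with the Airy group: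
`x · (U(t)f)(x) = (U(t)(3t f'' + y f))(x)` for Schwartz `f`. -/
theorem stmt0 (f : SchwartzMap ℝ ℂ) (t : ℝ) :
    ∀ x : ℝ,
      (x : ℂ) * airyU t (fun y => f y) x
        = airyU t (fun y => 3 * (t : ℂ) * deriv (deriv fun z : ℝ => f z) y + (y : ℂ) * f y) x := by
  intro x
  obtain ⟨F, hF⟩ := f.exists_coe_eq_FT
  have hF' (ξ : ℝ) : deriv F ξ = -I * FT (fun y => (y : ℂ) * f y) ξ := by
    rw [hF]
    exact (hasDerivAt_FT f.integrable f.integrable_ofReal_mul ξ).deriv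
  have hgenerator (ξ : ℝ) : I * deriv (fun ξ => airyPhase t ξ * F ξ) ξ
      = airyPhase t ξ * FT (fun y => 3 * (t : ℂ) * deriv (deriv f) y + (y : ℂ) * f y) ξ := by
    rw [(F.hasDerivAt_airyPhase_mul t ξ).deriv, f.FT_airyGenerator, hF', hF]
    linear_combination (airyPhase t ξ * (3 * t * (ξ : ℂ) ^ 2 * FT f ξ
      - FT (fun y => (y : ℂ) * f y) ξ)) * I_sq
  calc (x : ℂ) * airyU t (fun y => f y) x = x * invFT (fun ξ => airyPhase t ξ * F ξ) x := by
        rw [hF]; rfl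
    _ = invFT (fun ξ => I * deriv (fun ξ => airyPhase t ξ * F ξ) ξ) x :=
        ofReal_mul_invFT (F.integrable.airyPhase_mul t)
          (fun ξ => (F.hasDerivAt_airyPhase_mul t ξ).differentiableAt)
          (F.integrable_deriv_airyPhase_mul t) x
    _ = _ := by simp_rw [hgenerator]; rfl
end

section
/- Let k ≥ 1 be an integer, T > 0, and let u : ℝ×[0,T] → ℝ be continuous together with its partial derivatives ∂_t u, ∂_x u, ∂_x² u, ∂_x³ u, satisfying ∂_t u + ∂_x³ u + ∂_x(u^{k+1}) = 0 pointwise on ℝ×[0,T]. Assume that for every m ∈ ℕ, sup_{(x,t)∈ℝ×[0,T]} (1+|x|)^m (|u| + |∂_t u| + |∂_x u| + |∂_x² u| + |∂_x³ u|)(x,t) < ∞. Let φ ∈ C³(ℝ) be such that φ, φ', φ'', φ''' all have at most polynomial growth. Then ∫_ℝ φ(x)u²(x,T) dx − ∫_ℝ φ(x)u²(x,0) dx + 3∫_0^T∫_ℝ φ'(x)(∂_x u)²(x,t) dx dt − ∫_0^T∫_ℝ φ'''(x)u²(x,t) dx dt − (2(k+1)/(k+2))∫_0^T∫_ℝ φ'(x)u^{k+2}(x,t)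 dx dt = 0. -/
/-!
Along a solution, `∂ₜ(φ u²) = 2 φ u ∂ₜu`, and the equation turns this into `∂ₓF + R`, where `F` is
an explicit flux built from `φ, φ', φ''` and `u, ∂ₓu, ∂ₓ²u`, and `R` collects the three integrands
of the identity. Rapid decay of `u` against polynomial growth of the weights makes every term
integrable and `F` vanish at `±∞`, so `∫ ∂ₓF dx = 0`; integrating `∂ₜ(φ u²)` over `[0,T] × ℝ`
(Fubini, then the fundamental theorem of calculus in `t`) gives the identity.
-/

open MeasureTheory Set Filter Topology

theorem ContinuousOn.continuous_slice_of_mem {s : Set ℝ} {f : ℝ → ℝ → ℝ}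
    (hf : ContinuousOn (fun p : ℝ × ℝ => f p.1 p.2) (univ ×ˢ s)) {t : ℝ} (ht : t ∈ s) :
    Continuous (f · t) :=
  continuousOn_univ.mp <| hf.comp (Continuous.prodMk_left t).continuousOn fun _ _ => ⟨trivial, ht⟩

theorem ContinuousOn.continuousOn_slice {s : Set ℝ} {f : ℝ → ℝ → ℝ}
    (hf : ContinuousOn (fun p : ℝ × ℝ => f p.1 p.2) (univ ×ˢ s)) (x : ℝ) :
    ContinuousOn (f x) s :=
  hf.comp (Continuous.prodMk_right x).continuousOn fun _ ht => ⟨trivial, ht⟩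

def RapidlyDecreasingOn (s : Set ℝ) (f : ℝ → ℝ → ℝ) : Prop :=
  ∀ m : ℕ, ∃ M : ℝ, ∀ x, ∀ t ∈ s, (1 + |x|) ^ m * |f x t| ≤ M

namespace RapidlyDecreasingOn

variable {s : Set ℝ} {f g : ℝ → ℝ → ℝ}

theorem of_abs_le {S : ℝ → ℝ → ℝ}
    (hS : ∀ m : ℕ, ∃ M : ℝ, ∀ x, ∀ t ∈ s, (1 + |x|) ^ m * S x t ≤ M)
    (hf : ∀ x, ∀ t ∈ s, |f x t| ≤ S x t) : RapidlyDecreasingOn s f := fun m =>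
  (hS m).imp fun _ hM x t ht =>
    (mul_le_mul_of_nonneg_left (hf x t ht) (by positivity)).trans (hM x t ht)

theorem add (hf : RapidlyDecreasingOn s f) (hg : RapidlyDecreasingOn s g) :
    RapidlyDecreasingOn s fun x t => f x t + g x t := fun m => by
  obtain ⟨M, hM⟩ := hf m
  obtain ⟨N, hN⟩ := hg m
  refine ⟨M + N, fun x t ht => ?_⟩
  calc (1 + |x|) ^ m * |f x t + g x t| ≤ (1 + |x|) ^ m * |f x t| + (1 + |x|) ^ m * |g x t| := by
        rw [← mul_add]; gcongr; exact abs_add_le _ _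
    _ ≤ M + N := add_le_add (hM x t ht) (hN x t ht)

theorem const_mul (a : ℝ) (hf : RapidlyDecreasingOn s f) :
    RapidlyDecreasingOn s fun x t => a * f x t := fun m => by
  obtain ⟨M, hM⟩ := hf m
  refine ⟨|a| * M, fun x t ht => ?_⟩
  rw [abs_mul, mul_left_comm]
  exact mul_le_mul_of_nonneg_left (hM x t ht) (abs_nonneg a)

theorem sub (hf : RapidlyDecreasingOn s f) (hg : RapidlyDecreasingOn s g) :
    RapidlyDecreasingOn s fun x t => f x t - g x t := by
  simpa only [sub_eq_add_neg, neg_one_mul] using hf.add (hg.const_mul (-1))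

theorem mul (hf : RapidlyDecreasingOn s f) (hg : RapidlyDecreasingOn s g) :
    RapidlyDecreasingOn s fun x t => f x t * g x t := fun m => by
  obtain ⟨M, hM⟩ := hf m
  obtain ⟨B, hB⟩ := hg 0
  refine ⟨M * B, fun x t ht => ?_⟩
  have hgB : |g x t| ≤ B := by simpa using hB x t ht
  rw [abs_mul, ← mul_assoc]
  have hM0 : 0 ≤ M := (by positivity : (0 : ℝ) ≤ (1 + |x|) ^ m * |f x t|).trans (hM x t ht)
  exact mul_le_mul (hM x t ht) hgB (abs_nonneg _) hM0

theorem pow (hf : RapidlyDecreasingOn s f) {n : ℕ} (hn : n ≠ 0) :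
    RapidlyDecreasingOn s fun x t => f x t ^ n := by
  induction n with
  | zero => exact absurd rfl hn
  | succ n ih =>
    rcases eq_or_ne n 0 with rfl | hn
    · simpa only [zero_add, pow_one] using hf
    · simpa only [pow_succ] using (ih hn).mul hf

theorem weight_mul {w : ℝ → ℝ} (hw : ∃ C : ℝ, ∃ j : ℕ, ∀ x, |w x| ≤ C * (1 + |x|) ^ j)
    (hf : RapidlyDecreasingOn s f) : RapidlyDecreasingOn s fun x t => w x * f x t := fun m => by
  obtain ⟨C, j, hC⟩ := hw
  obtain ⟨M, hM⟩ := hf (m + j)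
  refine ⟨C * M, fun x t ht => ?_⟩
  have hC0 : 0 ≤ C := nonneg_of_mul_nonneg_left ((abs_nonneg _).trans (hC 0)) (by positivity)
  calc (1 + |x|) ^ m * |w x * f x t| ≤ (1 + |x|) ^ m * (C * (1 + |x|) ^ j * |f x t|) := by
        rw [abs_mul]; gcongr; exact hC x
    _ = C * ((1 + |x|) ^ (m + j) * |f x t|) := by ring
    _ ≤ C * M := mul_le_mul_of_nonneg_left (hM x t ht) hC0

theorem exists_abs_le_mul_inv_one_add_sq (hf : RapidlyDecreasingOn s f) :
    ∃ K : ℝ, ∀ x, ∀ t ∈ s, |f x t| ≤ K * (1 + x ^ 2)⁻¹ := by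
  obtain ⟨K, hK⟩ := hf 2
  refine ⟨K, fun x t ht => ?_⟩
  have hx : 1 + x ^ 2 ≤ (1 + |x|) ^ 2 := by nlinarith [abs_nonneg x, sq_abs x]
  rw [← div_eq_mul_inv, le_div_iff₀ (by positivity)]
  calc |f x t| * (1 + x ^ 2) ≤ (1 + |x|) ^ 2 * |f x t| := by
        rw [mul_comm]; exact mul_le_mul_of_nonneg_right hx (abs_nonneg _)
    _ ≤ K := hK x t ht

theorem tendsto_cocompact (hf : RapidlyDecreasingOn s f) {t : ℝ} (ht : t ∈ s) :
    Tendsto (f · t) (cocompact ℝ) (𝓝 0) := by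
  obtain ⟨K, hK⟩ := hf.exists_abs_le_mul_inv_one_add_sq
  have h : Tendsto (fun x : ℝ => 1 + x ^ 2) (cocompact ℝ) atTop :=
    tendsto_atTop_mono (fun x => by rw [Real.norm_eq_abs]; nlinarith [abs_nonneg x, sq_abs x])
      tendsto_norm_cocompact_atTop
  exact squeeze_zero_norm (fun x => hK x t ht) (by simpa using h.inv_tendsto_atTop.const_mul K)

theorem integrable (hf : RapidlyDecreasingOn s f)
    (hfc : ContinuousOn (fun p : ℝ × ℝ => f p.1 p.2) (univ ×ˢ s)) {t : ℝ} (ht : t ∈ s) :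
    Integrable (f · t) := by
  obtain ⟨K, hK⟩ := hf.exists_abs_le_mul_inv_one_add_sq
  exact (integrable_inv_one_add_sq.const_mul K).mono' (hfc.continuous_slice_of_mem ht).aestronglyMeasurable
    (ae_of_all _ fun x => hK x t ht)

theorem continuousOn_integral (hf : RapidlyDecreasingOn s f)
    (hfc : ContinuousOn (fun p : ℝ × ℝ => f p.1 p.2) (univ ×ˢ s)) :
    ContinuousOn (fun t => ∫ x, f x t) s := by
  obtain ⟨K, hK⟩ := hf.exists_abs_le_mul_inv_one_add_sq
  exact continuousOn_of_dominated (fun t ht => (hfc.continuous_slice_of_mem ht).aestronglyMeasurable)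
    (fun t ht => ae_of_all _ fun x => hK x t ht) (integrable_inv_one_add_sq.const_mul K)
    (ae_of_all _ hfc.continuousOn_slice)

end RapidlyDecreasingOn

section BalanceLaw

variable {T : ℝ} {ρ ρt F R f g : ℝ → ℝ → ℝ}

theorem integral_sub_integral_eq_intervalIntegral_integral (hT : 0 ≤ T)
    (hρ : RapidlyDecreasingOn (Icc 0 T) ρ)
    (hρc : ContinuousOn (fun p : ℝ × ℝ => ρ p.1 p.2) (univ ×ˢ Icc 0 T))
    (hρt : RapidlyDecreasingOn (Icc 0 T) ρt)
    (hρtc : ContinuousOn (fun p : ℝ × ℝ => ρt p.1 p.2) (univ ×ˢ Icc 0 T))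
    (hderiv : ∀ x, ∀ t ∈ Icc 0 T, HasDerivWithinAt (ρ x) (ρt x t) (Icc 0 T) t) :
    (∫ x, ρ x T) - ∫ x, ρ x 0 = ∫ t in 0..T, ∫ x, ρt x t := by
  have hFTC : ∀ x, ∫ t in 0..T, ρt x t = ρ x T - ρ x 0 := fun x =>
    intervalIntegral.integral_eq_sub_of_hasDeriv_right_of_le hT
      (fun t ht => (hderiv x t ht).continuousWithinAt)
      (fun t ht => ((hderiv x t (Ioo_subset_Icc_self ht)).hasDerivAt
        (Icc_mem_nhds ht.1 ht.2)).hasDerivWithinAt)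
      ((hρtc.continuousOn_slice x).intervalIntegrable_of_Icc hT)
  have hS : MeasurableSet (Ioc 0 T ×ˢ (univ : Set ℝ)) := measurableSet_Ioc.prod .univ
  have hprod : Integrable (Function.uncurry fun t x => ρt x t)
      ((volume.restrict (Ioc 0 T)).prod volume) := by
    obtain ⟨K, hK⟩ := hρt.exists_abs_le_mul_inv_one_add_sq
    have hbound : Integrable (fun p : ℝ × ℝ => (1 : ℝ) * (K * (1 + p.2 ^ 2)⁻¹))
        ((volume.restrict (Ioc 0 T)).prod volume) :=
      (integrable_const 1).mul_prod (integrable_inv_one_add_sq.const_mul K)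
    rw [← Measure.restrict_univ (μ := volume), Measure.prod_restrict] at hbound ⊢
    have hcont : ContinuousOn (Function.uncurry fun t x => ρt x t) (Ioc 0 T ×ˢ univ) :=
      hρtc.comp continuous_swap.continuousOn fun p hp => ⟨trivial, Ioc_subset_Icc_self hp.1⟩
    refine hbound.mono' (hcont.aestronglyMeasurable hS) ((ae_restrict_iff' hS).mpr
      (ae_of_all _ fun p hp => ?_))
    simpa [Function.uncurry] using hK p.2 p.1 (Ioc_subset_Icc_self hp.1)
  rw [intervalIntegral.integral_of_le hT, integral_integral_swap hprod,
    ← integral_sub (hρ.integrable hρc ⟨hT, le_rfl⟩) (hρ.integrable hρc ⟨le_rfl, hT⟩)]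
  simp only [← intervalIntegral.integral_of_le hT, hFTC]

theorem integral_sub_integral_eq_of_hasDerivAt_flux (hT : 0 ≤ T)
    (hρ : RapidlyDecreasingOn (Icc 0 T) ρ)
    (hρc : ContinuousOn (fun p : ℝ × ℝ => ρ p.1 p.2) (univ ×ˢ Icc 0 T))
    (hρt : RapidlyDecreasingOn (Icc 0 T) ρt)
    (hρtc : ContinuousOn (fun p : ℝ × ℝ => ρt p.1 p.2) (univ ×ˢ Icc 0 T))
    (hR : RapidlyDecreasingOn (Icc 0 T) R)
    (hRc : ContinuousOn (fun p : ℝ × ℝ => R p.1 p.2) (univ ×ˢ Icc 0 T))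
    (hρ_deriv : ∀ x, ∀ t ∈ Icc 0 T, HasDerivWithinAt (ρ x) (ρt x t) (Icc 0 T) t)
    (hF : ∀ t ∈ Icc 0 T, Tendsto (F · t) (cocompact ℝ) (𝓝 0))
    (hF_deriv : ∀ x, ∀ t ∈ Icc 0 T, HasDerivAt (F · t) (ρt x t - R x t) x) :
    (∫ x, ρ x T) - ∫ x, ρ x 0 = ∫ t in 0..T, ∫ x, R x t := by
  rw [integral_sub_integral_eq_intervalIntegral_integral hT hρ hρc hρt hρtc hρ_deriv]
  refine intervalIntegral.integral_congr fun t ht => ?_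
  rw [uIcc_of_le hT] at ht
  have hflux := integral_of_hasDerivAt_of_tendsto (fun x => hF_deriv x t ht)
    ((hρt.integrable hρtc ht).sub (hR.integrable hRc ht))
    ((hF t ht).mono_left atBot_le_cocompact) ((hF t ht).mono_left atTop_le_cocompact)
  rw [integral_sub (hρt.integrable hρtc ht) (hR.integrable hRc ht), sub_zero] at hflux
  exact sub_eq_zero.mp hflux

theorem intervalIntegral_integral_add (hT : 0 ≤ T)
    (hf : RapidlyDecreasingOn (Icc 0 T) f)
    (hfc : ContinuousOn (fun p : ℝ × ℝ => f p.1 p.2) (univ ×ˢ Icc 0 T))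
    (hg : RapidlyDecreasingOn (Icc 0 T) g)
    (hgc : ContinuousOn (fun p : ℝ × ℝ => g p.1 p.2) (univ ×ˢ Icc 0 T)) :
    ∫ t in 0..T, ∫ x, (f x t + g x t) = (∫ t in 0..T, ∫ x, f x t) + ∫ t in 0..T, ∫ x, g x t := by
  rw [← intervalIntegral.integral_add ((hf.continuousOn_integral hfc).intervalIntegrable_of_Icc hT)
    ((hg.continuousOn_integral hgc).intervalIntegrable_of_Icc hT)]
  refine intervalIntegral.integral_congr fun t ht => ?_
  rw [uIcc_of_le hT] at ht
  exact integral_add (hf.integrable hfc ht) (hg.integrable hgc ht)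

end BalanceLaw

theorem ContDiff.continuous_iterate_deriv {𝕜 E : Type*} [NontriviallyNormedField 𝕜]
    [NormedAddCommGroup E] [NormedSpace 𝕜 E] {n : WithTop ℕ∞} {f : 𝕜 → E}
    (hf : ContDiff 𝕜 n f) {j : ℕ} (hj : (j : WithTop ℕ∞) ≤ n) : Continuous (deriv^[j] f) :=
  iteratedDeriv_eq_iterate (f := f) ▸ hf.continuous_iteratedDeriv j hj

theorem ContDiff.hasDerivAt_iterate_deriv {𝕜 E : Type*} [NontriviallyNormedField 𝕜]
    [NormedAddCommGroup E] [NormedSpace 𝕜 E] {n : WithTop ℕ∞} {f : 𝕜 → E}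
    (hf : ContDiff 𝕜 n f) {j : ℕ} (hj : (j : WithTop ℕ∞) < n) (x : 𝕜) :
    HasDerivAt (deriv^[j] f) (deriv^[j + 1] f x) x := by
  rw [Function.iterate_succ_apply', ← iteratedDeriv_eq_iterate]
  exact (hf.differentiable_iteratedDeriv j hj).differentiableAt.hasDerivAt

/- With `c = 2(k+1)/(k+2)`, the term `-c φ v^{k+2}` of the flux differentiates to
`-c φ' v^{k+2} - 2(k+1) φ v^{k+1} v'`, matching the nonlinear part of `2 φ v w`. -/
theorem hasDerivAt_kdv_flux {k : ℕ} {φ φ' φ'' φ''' v v' v'' v''' : ℝ → ℝ} {x w : ℝ}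
    (hφ : HasDerivAt φ (φ' x) x) (hφ' : HasDerivAt φ' (φ'' x) x)
    (hφ'' : HasDerivAt φ'' (φ''' x) x) (hv : HasDerivAt v (v' x) x)
    (hv' : HasDerivAt v' (v'' x) x) (hv'' : HasDerivAt v'' (v''' x) x)
    (hw : w + v''' x + ((k : ℝ) + 1) * v x ^ k * v' x = 0) :
    HasDerivAt (fun y => φ y * (v' y ^ 2 - 2 * (v y * v'' y)
        - 2 * ((k : ℝ) + 1) / ((k : ℝ) + 2) * v y ^ (k + 2))
        + 2 * (φ' y * (v y * v' y)) - φ'' y * v y ^ 2)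
      (2 * (φ x * (v x * w)) - (-3 * (φ' x * v' x ^ 2) + φ''' x * v x ^ 2
        + 2 * ((k : ℝ) + 1) / ((k : ℝ) + 2) * (φ' x * v x ^ (k + 2)))) x := by
  have hw' : w = -v''' x - ((k : ℝ) + 1) * v x ^ k * v' x := by linarith
  refine ((hφ.mul (((hv'.pow 2).sub ((hv.mul hv'').const_mul 2)).sub
    ((hv.pow (k + 2)).const_mul _))).add ((hφ'.mul (hv.mul hv')).const_mul 2)).sub
    (hφ''.mul (hv.pow 2)) |>.congr_deriv ?_
  simp only [Pi.mul_apply, Pi.sub_apply, Pi.pow_apply, show k + 2 - 1 = k + 1 by omega]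
  rw [hw']
  push_cast
  field_simp
  ring

theorem stmt2_general (k : ℕ) (T : ℝ) (hT : 0 < T)
    (u ut ux uxx uxxx : ℝ → ℝ → ℝ)
    -- continuity of u and its partial derivatives on ℝ × [0,T]
    (hu_cont : ContinuousOn (fun p : ℝ × ℝ => u p.1 p.2) (Set.univ ×ˢ Set.Icc 0 T))
    (hut_cont : ContinuousOn (fun p : ℝ × ℝ => ut p.1 p.2) (Set.univ ×ˢ Set.Icc 0 T))
    (hux_cont : ContinuousOn (fun p : ℝ × ℝ => ux p.1 p.2) (Set.univ ×ˢ Set.Icc 0 T))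
    -- the partial derivatives
    (hux : ∀ x : ℝ, ∀ t ∈ Set.Icc (0 : ℝ) T, HasDerivAt (fun y => u y t) (ux x t) x)
    (huxx : ∀ x : ℝ, ∀ t ∈ Set.Icc (0 : ℝ) T, HasDerivAt (fun y => ux y t) (uxx x t) x)
    (huxxx : ∀ x : ℝ, ∀ t ∈ Set.Icc (0 : ℝ) T, HasDerivAt (fun y => uxx y t) (uxxx x t) x)
    (hut : ∀ x : ℝ, ∀ t ∈ Set.Icc (0 : ℝ) T,
      HasDerivWithinAt (fun s => u x s) (ut x t) (Set.Icc 0 T) t)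
    -- the equation: ∂_t u + ∂_x³ u + ∂_x(u^{k+1}) = 0, with ∂_x(u^{k+1}) = (k+1) u^k ∂_x u
    (hPDE : ∀ x : ℝ, ∀ t ∈ Set.Icc (0 : ℝ) T,
      ut x t + uxxx x t + ((k : ℝ) + 1) * u x t ^ k * ux x t = 0)
    -- rapid decay of u and its derivatives, uniformly for t ∈ [0,T]
    (hdecay : ∀ m : ℕ, ∃ M : ℝ, ∀ x : ℝ, ∀ t ∈ Set.Icc (0 : ℝ) T,
      (1 + |x|) ^ m * (|u x t| + |ut x t| + |ux x t| + |uxx x t| + |uxxx x t|) ≤ M)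
    -- the weight function φ ∈ C³ with polynomial growth of φ, φ', φ'', φ'''
    (φ : ℝ → ℝ) (hφ : ContDiff ℝ 3 φ)
    (hφgrowth : ∀ j : ℕ, j ≤ 3 → ∃ C : ℝ, ∃ m : ℕ, ∀ x : ℝ,
      |deriv^[j] φ x| ≤ C * (1 + |x|) ^ m) :
    (∫ x : ℝ, φ x * u x T ^ 2) - (∫ x : ℝ, φ x * u x 0 ^ 2)
      + 3 * (∫ t in (0 : ℝ)..T, ∫ x : ℝ, deriv φ x * ux x t ^ 2)
      - (∫ t in (0 : ℝ)..T, ∫ x : ℝ, deriv^[3] φ x * u x t ^ 2)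
      - (2 * ((k : ℝ) + 1) / ((k : ℝ) + 2))
          * (∫ t in (0 : ℝ)..T, ∫ x : ℝ, deriv φ x * u x t ^ (k + 2)) = 0 := by
  set c : ℝ := 2 * ((k : ℝ) + 1) / ((k : ℝ) + 2)
  have hu : RapidlyDecreasingOn (Icc 0 T) u := .of_abs_le hdecay fun x t _ => by
    linarith [abs_nonneg (ut x t), abs_nonneg (ux x t), abs_nonneg (uxx x t), abs_nonneg (uxxx x t)]
  have hut_decay : RapidlyDecreasingOn (Icc 0 T) ut := .of_abs_le hdecay fun x t _ => by
    linarith [abs_nonneg (u x t), abs_nonneg (ux x t), abs_nonneg (uxx x t), abs_nonneg (uxxx x t)]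
  have hux_decay : RapidlyDecreasingOn (Icc 0 T) ux := .of_abs_le hdecay fun x t _ => by
    linarith [abs_nonneg (u x t), abs_nonneg (ut x t), abs_nonneg (uxx x t), abs_nonneg (uxxx x t)]
  have huxx_decay : RapidlyDecreasingOn (Icc 0 T) uxx := .of_abs_le hdecay fun x t _ => by
    linarith [abs_nonneg (u x t), abs_nonneg (ut x t), abs_nonneg (ux x t), abs_nonneg (uxxx x t)]
  have hφ0 : Continuous φ := hφ.continuous
  have hφ1 : Continuous (deriv φ) := hφ.continuous_iterate_deriv (j := 1) (by norm_num)
  have hφ3 : Continuous (deriv^[3] φ) := hφ.continuous_iterate_deriv (j := 3) (by norm_num)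
  have h1 : RapidlyDecreasingOn (Icc 0 T) fun x t => deriv φ x * ux x t ^ 2 :=
    (hux_decay.pow two_ne_zero).weight_mul (hφgrowth 1 (by norm_num))
  have h2 : RapidlyDecreasingOn (Icc 0 T) fun x t => deriv^[3] φ x * u x t ^ 2 :=
    (hu.pow two_ne_zero).weight_mul (hφgrowth 3 le_rfl)
  have h3 : RapidlyDecreasingOn (Icc 0 T) fun x t => deriv φ x * u x t ^ (k + 2) :=
    (hu.pow (by omega)).weight_mul (hφgrowth 1 (by norm_num))
  have key := integral_sub_integral_eq_of_hasDerivAt_flux hT.le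
    (ρ := fun x t => φ x * u x t ^ 2) (ρt := fun x t => 2 * (φ x * (u x t * ut x t)))
    (F := fun x t => φ x * (ux x t ^ 2 - 2 * (u x t * uxx x t) - c * u x t ^ (k + 2))
      + 2 * (deriv φ x * (u x t * ux x t)) - deriv^[2] φ x * u x t ^ 2)
    (R := fun x t => -3 * (deriv φ x * ux x t ^ 2) + deriv^[3] φ x * u x t ^ 2
      + c * (deriv φ x * u x t ^ (k + 2)))
    ((hu.pow two_ne_zero).weight_mul (hφgrowth 0 (by norm_num))) (by fun_prop)
    (((hu.mul hut_decay).weight_mul (hφgrowth 0 (by norm_num))).const_mul 2) (by fun_prop)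
    (((h1.const_mul (-3)).add h2).add (h3.const_mul c)) (by fun_prop)
    (fun x t ht => (((hut x t ht).pow 2).const_mul (φ x)).congr_deriv (by ring))
    (fun t ht => ((((((hux_decay.pow two_ne_zero).sub ((hu.mul huxx_decay).const_mul 2)).sub
      ((hu.pow (by omega)).const_mul c)).weight_mul (hφgrowth 0 (by norm_num))).add
      (((hu.mul hux_decay).weight_mul (hφgrowth 1 (by norm_num))).const_mul 2)).sub
      ((hu.pow two_ne_zero).weight_mul (hφgrowth 2 (by norm_num)))).tendsto_cocompact ht)
    (fun x t ht => hasDerivAt_kdv_flux (φ' := deriv φ) (φ'' := deriv^[2] φ)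
      (v := (u · t)) (v' := (ux · t)) (v'' := (uxx · t)) (v''' := (uxxx · t))
      (hφ.hasDerivAt_iterate_deriv (j := 0) (by norm_num) x)
      (hφ.hasDerivAt_iterate_deriv (j := 1) (by norm_num) x)
      (hφ.hasDerivAt_iterate_deriv (j := 2) (by norm_num) x)
      (hux x t ht) (huxx x t ht) (huxxx x t ht) (hPDE x t ht))
  rw [intervalIntegral_integral_add hT.le ((h1.const_mul (-3)).add h2) (by fun_prop)
      (h3.const_mul c) (by fun_prop),
    intervalIntegral_integral_add hT.le (h1.const_mul (-3)) (by fun_prop) h2 (by fun_prop)] at key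
  simp only [integral_const_mul, intervalIntegral.integral_const_mul] at key
  linarith

/-- Weighted energy identity for classical, rapidly decaying solutions of the
k-generalized KdV equation `∂_t u + ∂_x³ u + ∂_x(u^{k+1}) = 0` on `ℝ × [0,T]`. -/
theorem stmt2 (k : ℕ) (hk : 1 ≤ k) (T : ℝ) (hT : 0 < T)
    (u ut ux uxx uxxx : ℝ → ℝ → ℝ)
    -- continuity of u and its partial derivatives on ℝ × [0,T]
    (hu_cont : ContinuousOn (fun p : ℝ × ℝ => u p.1 p.2) (Set.univ ×ˢ Set.Icc 0 T))
    (hut_cont : ContinuousOn (fun p : ℝ × ℝ => ut p.1 p.2) (Set.univ ×ˢ Set.Icc 0 T))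
    (hux_cont : ContinuousOn (fun p : ℝ × ℝ => ux p.1 p.2) (Set.univ ×ˢ Set.Icc 0 T))
    (huxx_cont : ContinuousOn (fun p : ℝ × ℝ => uxx p.1 p.2) (Set.univ ×ˢ Set.Icc 0 T))
    (huxxx_cont : ContinuousOn (fun p : ℝ × ℝ => uxxx p.1 p.2) (Set.univ ×ˢ Set.Icc 0 T))
    -- the partial derivatives
    (hux : ∀ x : ℝ, ∀ t ∈ Set.Icc (0 : ℝ) T, HasDerivAt (fun y => u y t) (ux x t) x)
    (huxx : ∀ x : ℝ, ∀ t ∈ Set.Icc (0 : ℝ) T, HasDerivAt (fun y => ux y t) (uxx x t) x)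
    (huxxx : ∀ x : ℝ, ∀ t ∈ Set.Icc (0 : ℝ) T, HasDerivAt (fun y => uxx y t) (uxxx x t) x)
    (hut : ∀ x : ℝ, ∀ t ∈ Set.Icc (0 : ℝ) T,
      HasDerivWithinAt (fun s => u x s) (ut x t) (Set.Icc 0 T) t)
    -- the equation: ∂_t u + ∂_x³ u + ∂_x(u^{k+1}) = 0, with ∂_x(u^{k+1}) = (k+1) u^k ∂_x u
    (hPDE : ∀ x : ℝ, ∀ t ∈ Set.Icc (0 : ℝ) T,
      ut x t + uxxx x t + ((k : ℝ) + 1) * u x t ^ k * ux x t = 0)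
    -- rapid decay of u and its derivatives, uniformly for t ∈ [0,T]
    (hdecay : ∀ m : ℕ, ∃ M : ℝ, ∀ x : ℝ, ∀ t ∈ Set.Icc (0 : ℝ) T,
      (1 + |x|) ^ m * (|u x t| + |ut x t| + |ux x t| + |uxx x t| + |uxxx x t|) ≤ M)
    -- the weight function φ ∈ C³ with polynomial growth of φ, φ', φ'', φ'''
    (φ : ℝ → ℝ) (hφ : ContDiff ℝ 3 φ)
    (hφgrowth : ∀ j : ℕ, j ≤ 3 → ∃ C : ℝ, ∃ m : ℕ, ∀ x : ℝ,
      |deriv^[j] φ x| ≤ C * (1 + |x|) ^ m) :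
    (∫ x : ℝ, φ x * u x T ^ 2) - (∫ x : ℝ, φ x * u x 0 ^ 2)
      + 3 * (∫ t in (0 : ℝ)..T, ∫ x : ℝ, deriv φ x * ux x t ^ 2)
      - (∫ t in (0 : ℝ)..T, ∫ x : ℝ, deriv^[3] φ x * u x t ^ 2)
      - (2 * ((k : ℝ) + 1) / ((k : ℝ) + 2))
          * (∫ t in (0 : ℝ)..T, ∫ x : ℝ, deriv φ x * u x t ^ (k + 2)) = 0 :=
  stmt2_general k T hT u ut ux uxx uxxx hu_cont hut_cont hux_cont hux huxx huxxx hut hPDE hdecay φ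
    hφ hφgrowth
end

section
/- There is an absolute constant C such that for all real numbers a < b < 0, the integral ∫_0^π (e^{a·sin s} − e^{b·sin s})/sin s ds converges absolutely and |∫_0^π (e^{a·sin s} − e^{b·sin s})/sin s ds| ≤ C·((πa/b − 1) + 1 + (b/(πa))·e^{−πa/b}). -/
/-!
For `x ≥ 0` the convexity bound `e^{(a-b)x} ≥ 1 + (a-b)x` gives
`|e^{ax} - e^{bx}| / x ≤ (b - a) e^{bx}`, so the integrand is dominated by `(b - a) e^{b sin s}`.
Jordan's inequality `sin s ≥ 2s/π` on `[0, π/2]`, together with the symmetry `s ↦ π - s`, bounds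
`∫₀^π e^{b sin s} ds` by `π / |b|`. Hence the integral is at most `(b - a) π / |b| = πa/b - π`,
which is below the right-hand side with `C = 1`.
-/

open MeasureTheory Real

lemma exp_mul_sub_exp_mul_le (a b x : ℝ) :
    exp (b * x) - exp (a * x) ≤ (b - a) * x * exp (b * x) := by
  have hsplit : exp (a * x) = exp (b * x) * exp ((a - b) * x) := by
    rw [← exp_add]; ring_nf
  nlinarith [add_one_le_exp ((a - b) * x), exp_pos (b * x)]

lemma norm_exp_mul_sub_exp_mul_div_le {a b x : ℝ} (hab : a ≤ b) (hx : 0 ≤ x) :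
    ‖(exp (a * x) - exp (b * x)) / x‖ ≤ (b - a) * exp (b * x) := by
  rcases hx.eq_or_lt with rfl | hx
  · simp only [div_zero, norm_zero, mul_zero, exp_zero, mul_one]
    linarith
  have hmono : exp (a * x) ≤ exp (b * x) := exp_le_exp.2 (by nlinarith)
  rw [norm_div, Real.norm_of_nonneg hx.le, div_le_iff₀ hx, Real.norm_eq_abs, abs_sub_comm,
    abs_of_nonneg (sub_nonneg.2 hmono)]
  linarith [exp_mul_sub_exp_mul_le a b x]

lemma integral_exp_mul_le_neg_inv {c : ℝ} (hc : c < 0) (L : ℝ) :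
    ∫ s in (0 : ℝ)..L, exp (c * s) ≤ -c⁻¹ := by
  rw [intervalIntegral.integral_comp_mul_left (fun s => exp s) hc.ne, integral_exp, mul_zero,
    exp_zero, smul_eq_mul]
  nlinarith [inv_lt_zero.2 hc, exp_pos (c * L)]

lemma integral_exp_mul_sin_le_of_le_pi_div_two {b : ℝ} (hb : b < 0) :
    ∫ s in (0 : ℝ)..π / 2, exp (b * sin s) ≤ π / (2 * -b) := by
  have hjordan : ∫ s in (0 : ℝ)..π / 2, exp (b * sin s)
      ≤ ∫ s in (0 : ℝ)..π / 2, exp (2 * b / π * s) := by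
    refine intervalIntegral.integral_mono_on (by positivity)
      (Continuous.intervalIntegrable (by fun_prop) _ _)
      (Continuous.intervalIntegrable (by fun_prop) _ _) ?_
    intro s hs
    have := mul_le_mul_of_nonpos_left (mul_le_sin hs.1 hs.2) hb.le
    exact exp_le_exp.2 (by linarith [show 2 * b / π * s = b * (2 / π * s) by ring])
  have hc : 2 * b / π < 0 := div_neg_of_neg_of_pos (by linarith) pi_pos
  calc _ ≤ _ := hjordan
    _ ≤ -(2 * b / π)⁻¹ := integral_exp_mul_le_neg_inv hc _
    _ = π / (2 * -b) := by field_simp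

lemma integral_exp_mul_sin_le {b : ℝ} (hb : b < 0) :
    ∫ s in (0 : ℝ)..π, exp (b * sin s) ≤ π / -b := by
  have hcont : Continuous fun s => exp (b * sin s) := by fun_prop
  have hsymm : ∫ s in π / 2..π, exp (b * sin s) = ∫ s in (0 : ℝ)..π / 2, exp (b * sin s) := by
    conv_lhs => enter [1, s]; rw [← sin_pi_sub]
    rw [intervalIntegral.integral_comp_sub_left (fun s => exp (b * sin s))]
    norm_num [sub_half]
  rw [← intervalIntegral.integral_add_adjacent_intervals (hcont.intervalIntegrable 0 (π / 2))
    (hcont.intervalIntegrable _ _), hsymm]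
  linarith [integral_exp_mul_sin_le_of_le_pi_div_two hb, show π / (2 * -b) * 2 = π / -b by ring]

lemma norm_exp_mul_sin_sub_div_sin_le {a b s : ℝ} (hab : a ≤ b) (hs : s ∈ Set.Icc 0 π) :
    ‖(exp (a * sin s) - exp (b * sin s)) / sin s‖ ≤ (b - a) * exp (b * sin s) :=
  norm_exp_mul_sub_exp_mul_div_le hab (sin_nonneg_of_nonneg_of_le_pi hs.1 hs.2)

lemma intervalIntegrable_exp_mul_sin_sub_div_sin {a b : ℝ} (hab : a ≤ b) :
    IntervalIntegrable (fun s => (exp (a * sin s) - exp (b * sin s)) / sin s) volume 0 π := by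
  refine IntervalIntegrable.mono_fun' (g := fun s => (b - a) * exp (b * sin s))
    (Continuous.intervalIntegrable (by fun_prop) _ _)
    (by fun_prop : Measurable _).aestronglyMeasurable ?_
  rw [Set.uIoc_of_le pi_pos.le]
  exact ae_restrict_of_forall_mem measurableSet_Ioc
    fun s hs => norm_exp_mul_sin_sub_div_sin_le hab (Set.Ioc_subset_Icc_self hs)

lemma abs_integral_exp_mul_sin_sub_div_sin_le {a b : ℝ} (hab : a ≤ b) (hb : b < 0) :
    |∫ s in (0 : ℝ)..π, (exp (a * sin s) - exp (b * sin s)) / sin s| ≤ π * a / b - π := by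
  have hdom := intervalIntegral.norm_integral_le_of_norm_le (μ := volume) pi_pos.le
    (Filter.Eventually.of_forall fun s hs => norm_exp_mul_sin_sub_div_sin_le hab
      (Set.Ioc_subset_Icc_self hs))
    (Continuous.intervalIntegrable (by fun_prop : Continuous fun s => (b - a) * exp (b * sin s))
      0 π)
  rw [intervalIntegral.integral_const_mul] at hdom
  rw [← Real.norm_eq_abs]
  calc _ ≤ _ := hdom
    _ ≤ (b - a) * (π / -b) := mul_le_mul_of_nonneg_left (integral_exp_mul_sin_le hb) (by linarith)
    _ = π * a / b - π := by field_simp [hb.ne]; ring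

/-- Elementary integral estimate: for `a < b < 0`,
`|∫₀^π (e^{a sin s} - e^{b sin s})/sin s ds| ≲ (πa/b - 1) + 1 + (b/(πa)) e^{-πa/b}`. -/
theorem stmt10 :
    ∃ C : ℝ, ∀ a b : ℝ, a < b → b < 0 →
      IntervalIntegrable
        (fun s => (Real.exp (a * Real.sin s) - Real.exp (b * Real.sin s)) / Real.sin s)
        volume 0 Real.pi ∧
      |∫ s in (0 : ℝ)..Real.pi,
          (Real.exp (a * Real.sin s) - Real.exp (b * Real.sin s)) / Real.sin s|
        ≤ C * ((Real.pi * a / b - 1) + 1 + (b / (Real.pi * a)) * Real.exp (-(Real.pi * a) / b)) := by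
  refine ⟨1, fun a b hab hb => ⟨intervalIntegrable_exp_mul_sin_sub_div_sin hab.le, ?_⟩⟩
  have htail : 0 < b / (π * a) * exp (-(π * a) / b) :=
    mul_pos (div_pos_of_neg_of_neg hb (mul_neg_of_pos_of_neg pi_pos (hab.trans hb)))
      (exp_pos _)
  linarith [abs_integral_exp_mul_sin_sub_div_sin_le hab.le hb, pi_pos]
end

section
/- Let k : ℝ → ℂ be a measurable function with A := ∫_ℝ |y|^{1/8} |k(y)| dy < ∞. Then for every h ∈ L²(ℝ), the function x ↦ ∫_ℝ (|x|^{1/8} − |y|^{1/8}) k(x−y) h(y) dy is well defined almost everywhere, belongs to L²(ℝ), and ‖∫_ℝ (|x|^{1/8} − |y|^{1/8}) k(x−y) h(y) dy‖_{L²_x} ≤ A ‖h‖_{L²}. -/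
/-!
For `0 ≤ p ≤ 1` the map `t ↦ t ^ p` is subadditive on `[0, ∞)`, whence
`||x|^p - |y|^p| ≤ |x - y|^p`. The kernel `(|x|^{1/8} - |y|^{1/8}) k(x - y)` is therefore
dominated by `g(x - y)` with `g(z) = |z|^{1/8} |k(z)|` integrable. Such a kernel is bounded on
`L²` with norm at most `‖g‖₁` by Schur's test: Cauchy–Schwarz against the weight `g(x - ·)`
followed by Tonelli, both `∫ g(x - y) dy` and `∫ g(x - y) dx` being equal to `‖g‖₁` by
translation invariance.
-/

open MeasureTheory ENNReal

theorem Real.abs_rpow_sub_rpow_le {p a b : ℝ} (ha : 0 ≤ a) (hb : 0 ≤ b) (hp0 : 0 ≤ p)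
    (hp1 : p ≤ 1) : |a ^ p - b ^ p| ≤ |a - b| ^ p := by
  wlog hba : b ≤ a generalizing a b
  · rw [abs_sub_comm, abs_sub_comm a]
    exact this hb ha (le_of_not_ge hba)
  have hsub : a ^ p ≤ (a - b) ^ p + b ^ p := by
    simpa using Real.rpow_add_le_add_rpow (sub_nonneg.2 hba) hb hp0 hp1
  rw [abs_of_nonneg (sub_nonneg.2 (Real.rpow_le_rpow hb hba hp0)),
    abs_of_nonneg (sub_nonneg.2 hba)]
  linarith

theorem Real.abs_abs_rpow_sub_abs_rpow_le {p : ℝ} (hp0 : 0 ≤ p) (hp1 : p ≤ 1) (x y : ℝ) :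
    |(|x| ^ p - |y| ^ p)| ≤ |x - y| ^ p :=
  (Real.abs_rpow_sub_rpow_le (abs_nonneg x) (abs_nonneg y) hp0 hp1).trans <|
    Real.rpow_le_rpow (abs_nonneg _) (abs_abs_sub_abs_le_abs_sub x y) hp0

namespace MeasureTheory

variable {α β : Type*} [MeasurableSpace α] [MeasurableSpace β] {μ : Measure α} {ν : Measure β}

theorem sq_lintegral_mul_le {K H : α → ℝ≥0∞} (hK : AEMeasurable K μ)
    (hH : AEMeasurable H μ) :
    (∫⁻ a, K a * H a ∂μ) ^ 2 ≤ (∫⁻ a, K a ∂μ) * ∫⁻ a, K a * H a ^ 2 ∂μ := by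
  have hKH : AEMeasurable (fun a ↦ K a * H a ^ 2) μ := hK.mul (hH.pow_const 2)
  have hCS := lintegral_mul_norm_pow_le hK hKH (p := 1 / 2) (q := 1 / 2)
    (by norm_num) (by norm_num) (by norm_num)
  have hsplit : ∀ a, K a ^ (1 / 2 : ℝ) * (K a * H a ^ 2) ^ (1 / 2 : ℝ) = K a * H a := by
    intro a
    rw [ENNReal.mul_rpow_of_nonneg _ _ (by norm_num), ← mul_assoc,
      ← ENNReal.rpow_add_of_nonneg _ _ (by norm_num) (by norm_num), ← ENNReal.rpow_natCast,
      ← ENNReal.rpow_mul]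
    norm_num
  simp only [hsplit] at hCS
  calc (∫⁻ a, K a * H a ∂μ) ^ 2
      ≤ ((∫⁻ a, K a ∂μ) ^ (1 / 2 : ℝ) * (∫⁻ a, K a * H a ^ 2 ∂μ) ^ (1 / 2 : ℝ)) ^ 2 := by
        gcongr
    _ = (∫⁻ a, K a ∂μ) * ∫⁻ a, K a * H a ^ 2 ∂μ := by
        rw [mul_pow, ← ENNReal.rpow_natCast, ← ENNReal.rpow_natCast, ← ENNReal.rpow_mul,
          ← ENNReal.rpow_mul]
        norm_num

theorem lintegral_sq_lintegral_mul_le_of_lintegral_le [SFinite μ] [SFinite ν]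
    {K : α → β → ℝ≥0∞} (hK : Measurable (Function.uncurry K)) {H : β → ℝ≥0∞}
    (hH : AEMeasurable H ν) {A B : ℝ≥0∞}
    (hrow : ∀ x, ∫⁻ y, K x y ∂ν ≤ A) (hcol : ∀ y, ∫⁻ x, K x y ∂μ ≤ B) :
    ∫⁻ x, (∫⁻ y, K x y * H y ∂ν) ^ 2 ∂μ ≤ A * B * ∫⁻ y, H y ^ 2 ∂ν := by
  have hKH : AEMeasurable (Function.uncurry fun x y ↦ K x y * H y ^ 2) (μ.prod ν) :=
    hK.aemeasurable.mul
      ((hH.pow_const 2).comp_quasiMeasurePreserving Measure.quasiMeasurePreserving_snd)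
  calc ∫⁻ x, (∫⁻ y, K x y * H y ∂ν) ^ 2 ∂μ
      ≤ ∫⁻ x, A * ∫⁻ y, K x y * H y ^ 2 ∂ν ∂μ := by
        refine lintegral_mono fun x ↦ (sq_lintegral_mul_le ?_ hH).trans ?_
        · exact hK.of_uncurry_left.aemeasurable
        · gcongr
          exact hrow x
    _ = A * ∫⁻ y, (∫⁻ x, K x y ∂μ) * H y ^ 2 ∂ν := by
        have hinner : AEMeasurable (fun x ↦ ∫⁻ y, K x y * H y ^ 2 ∂ν) μ :=
          hKH.lintegral_prod_right'
        rw [lintegral_const_mul'' _ hinner, lintegral_lintegral_swap hKH]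
        simp only [lintegral_mul_const _ hK.of_uncurry_right]
    _ ≤ A * ∫⁻ y, B * H y ^ 2 ∂ν := by
        gcongr with y
        exact hcol y
    _ = A * B * ∫⁻ y, H y ^ 2 ∂ν := by
        rw [lintegral_const_mul'' _ (hH.pow_const 2), mul_assoc]

theorem sq_eLpNorm_two {ε : Type*} [ENorm ε] (f : α → ε) :
    eLpNorm f 2 μ ^ 2 = ∫⁻ a, ‖f a‖ₑ ^ 2 ∂μ := by
  simpa using eLpNorm_nnreal_pow_eq_lintegral (f := f) (μ := μ) (p := 2) two_ne_zero

section ConvolutionDominated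

variable {G : Type*} [AddGroup G] [MeasurableSpace G] [MeasurableAdd₂ G] [MeasurableNeg G]
  {μ : Measure G} [SFinite μ] [μ.IsAddLeftInvariant] [μ.IsAddRightInvariant] [μ.IsNegInvariant]

theorem lintegral_sq_lintegral_sub_mul_le {g : G → ℝ≥0∞} (hg : Measurable g) {H : G → ℝ≥0∞}
    (hH : AEMeasurable H μ) :
    ∫⁻ x, (∫⁻ y, g (x - y) * H y ∂μ) ^ 2 ∂μ ≤ (∫⁻ z, g z ∂μ) ^ 2 * ∫⁻ y, H y ^ 2 ∂μ := by
  rw [sq (∫⁻ z, g z ∂μ)]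
  exact lintegral_sq_lintegral_mul_le_of_lintegral_le (K := fun x y ↦ g (x - y))
    (hg.comp measurable_sub) hH (fun x ↦ (lintegral_sub_left_eq_self g x).le)
    (fun y ↦ (lintegral_sub_right_eq_self g y).le)

variable {𝕜 : Type*} [RCLike 𝕜] {K : G → G → 𝕜} {g : G → ℝ} {h : G → 𝕜}

theorem lintegral_sq_lintegral_enorm_mul_le (hg : Measurable g) (hgi : Integrable g μ)
    (hKg : ∀ x y, ‖K x y‖ ≤ g (x - y)) (hh : AEStronglyMeasurable h μ) :
    ∫⁻ x, (∫⁻ y, ‖K x y * h y‖ₑ ∂μ) ^ 2 ∂μ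
      ≤ ENNReal.ofReal (∫ z, g z ∂μ) ^ 2 * eLpNorm h 2 μ ^ 2 := by
  have hg0 : 0 ≤ g := fun z ↦ by simpa using (norm_nonneg _).trans (hKg z 0)
  have hpointwise (x y : G) : ‖K x y * h y‖ₑ ≤ ENNReal.ofReal (g (x - y)) * ‖h y‖ₑ := by
    rw [enorm_mul, ← ofReal_norm]
    gcongr
    exact hKg x y
  calc ∫⁻ x, (∫⁻ y, ‖K x y * h y‖ₑ ∂μ) ^ 2 ∂μ
      ≤ ∫⁻ x, (∫⁻ y, ENNReal.ofReal (g (x - y)) * ‖h y‖ₑ ∂μ) ^ 2 ∂μ := by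
        gcongr with x y
        exact hpointwise x y
    _ ≤ (∫⁻ z, ENNReal.ofReal (g z) ∂μ) ^ 2 * ∫⁻ y, ‖h y‖ₑ ^ 2 ∂μ :=
        lintegral_sq_lintegral_sub_mul_le hg.ennreal_ofReal hh.enorm
    _ = ENNReal.ofReal (∫ z, g z ∂μ) ^ 2 * eLpNorm h 2 μ ^ 2 := by
        rw [ofReal_integral_eq_lintegral_ofReal hgi (.of_forall hg0), sq_eLpNorm_two]

theorem integral_mul_memLp_two_of_norm_le_sub
    (hK : AEStronglyMeasurable (Function.uncurry K) (μ.prod μ)) (hg : Measurable g)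
    (hgi : Integrable g μ) (hKg : ∀ x y, ‖K x y‖ ≤ g (x - y)) (hh : MemLp h 2 μ) :
    (∀ᵐ x ∂μ, Integrable (fun y ↦ K x y * h y) μ) ∧
      MemLp (fun x ↦ ∫ y, K x y * h y ∂μ) 2 μ ∧
      eLpNorm (fun x ↦ ∫ y, K x y * h y ∂μ) 2 μ
        ≤ ENNReal.ofReal (∫ z, g z ∂μ) * eLpNorm h 2 μ := by
  have hF : AEStronglyMeasurable (fun p : G × G ↦ K p.1 p.2 * h p.2) (μ.prod μ) :=
    hK.mul hh.1.comp_snd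
  have hL2 := lintegral_sq_lintegral_enorm_mul_le hg hgi hKg hh.1
  have hfin : ENNReal.ofReal (∫ z, g z ∂μ) * eLpNorm h 2 μ < ⊤ :=
    ENNReal.mul_lt_top ofReal_lt_top hh.2
  have hbound : eLpNorm (fun x ↦ ∫ y, K x y * h y ∂μ) 2 μ
      ≤ ENNReal.ofReal (∫ z, g z ∂μ) * eLpNorm h 2 μ := by
    rw [← ENNReal.pow_le_pow_left_iff two_ne_zero, sq_eLpNorm_two, mul_pow]
    refine le_trans ?_ hL2
    gcongr with x
    exact enorm_integral_le_lintegral_enorm _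
  refine ⟨?_, ⟨hF.integral_prod_right', hbound.trans_lt hfin⟩, hbound⟩
  have hsq_fin : ∫⁻ x, (∫⁻ y, ‖K x y * h y‖ₑ ∂μ) ^ 2 ∂μ ≠ ⊤ :=
    (hL2.trans_lt (by rw [← mul_pow]; exact pow_lt_top hfin)).ne
  filter_upwards [ae_lt_top' (hF.enorm.lintegral_prod_right'.pow_const 2) hsq_fin,
    hF.prodMk_left] with x hx hxm
  exact ⟨hxm, (pow_lt_top_iff.1 hx).resolve_right two_ne_zero⟩

end ConvolutionDominated

end MeasureTheory

/-- L² boundedness of the commutator-type operator with kernel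
`(|x|^{1/8} - |y|^{1/8}) k(x-y)`, with operator norm at most `A = ∫ |y|^{1/8}|k(y)| dy`. -/
theorem stmt18 (k : ℝ → ℂ) (hk : Measurable k)
    (hA : Integrable (fun y : ℝ => |y| ^ ((1 : ℝ) / 8) * ‖k y‖)) :
    ∀ h : ℝ → ℂ, MemLp h 2 (volume : Measure ℝ) →
      (∀ᵐ x : ℝ, Integrable
        (fun y : ℝ => (((|x| ^ ((1 : ℝ) / 8) - |y| ^ ((1 : ℝ) / 8) : ℝ)) : ℂ)
          * k (x - y) * h y)) ∧
      MemLp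
        (fun x : ℝ => ∫ y : ℝ, (((|x| ^ ((1 : ℝ) / 8) - |y| ^ ((1 : ℝ) / 8) : ℝ)) : ℂ)
          * k (x - y) * h y) 2 (volume : Measure ℝ) ∧
      eLpNorm
        (fun x : ℝ => ∫ y : ℝ, (((|x| ^ ((1 : ℝ) / 8) - |y| ^ ((1 : ℝ) / 8) : ℝ)) : ℂ)
          * k (x - y) * h y) 2 (volume : Measure ℝ)
        ≤ ENNReal.ofReal (∫ y : ℝ, |y| ^ ((1 : ℝ) / 8) * ‖k y‖)
            * eLpNorm h 2 (volume : Measure ℝ) := by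
  intro h hh
  have hK : Measurable fun p : ℝ × ℝ ↦
      (((|p.1| ^ ((1 : ℝ) / 8) - |p.2| ^ ((1 : ℝ) / 8) : ℝ)) : ℂ) * k (p.1 - p.2) := by
    fun_prop
  have hKg : ∀ x y : ℝ, ‖(((|x| ^ ((1 : ℝ) / 8) - |y| ^ ((1 : ℝ) / 8) : ℝ)) : ℂ) * k (x - y)‖
      ≤ |x - y| ^ ((1 : ℝ) / 8) * ‖k (x - y)‖ := fun x y ↦ by
    rw [norm_mul, Complex.norm_real, Real.norm_eq_abs]
    gcongr
    exact Real.abs_abs_rpow_sub_abs_rpow_le (by norm_num) (by norm_num) x y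
  exact integral_mul_memLp_two_of_norm_le_sub hK.aestronglyMeasurable (by fun_prop) hA hKg hh
end
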